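/- arXiv:1701.01423 — 2 statements merged into one kernel-verified Lean document; each statement's English description precedes it below -/
import Mathlib

section
/- Let A be a Hopf algebra over a commutative ring, with antipode S, counit ε, and comultiplication Δ, and suppose ψ : A → R is a linear functional satisfying ψ(ab) = ψ(b S²(a)) for all a, b. Then ψ is invariant under the coadjoint action: for all a, x in A, ψ(ad_a(x)) = ε(a) ψ(x), where ad_a(x) = Σ a'_j x S(a''_j) with Δ(a) = Σ a'_j ⊗ a''_j. -/
open TensorProduct

/-- The adjoint action `ad_a(x) = Σ a₍₁₎ x S(a₍₂₎)` in a Hopf algebra. -/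
noncomputable def adAction (R : Type*) {A : Type*} [CommRing R] [Ring A] [HopfAlgebra R A]
    (a x : A) : A :=
  LinearMap.mul' R A
    ((TensorProduct.map (LinearMap.mulRight R x) (HopfAlgebra.antipode (R := R)))
      (Coalgebra.comul (R := R) a))

/-!
With `a ↦ a₍₁₎ ⊗ a₍₂₎` the coproduct, the trace property moves `a₍₁₎` to the far right as
`S²(a₍₁₎)`, so `ψ(ad_a x) = ψ(x · Σ S(a₍₂₎) S²(a₍₁₎)) = ψ(x · S(Σ S(a₍₁₎) a₍₂₎))`, and the antipode
axiom turns the last sum into `ε(a) · 1`.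
-/

open Coalgebra HopfAlgebra

lemma HopfAlgebra.sum_antipode_mul_antipode_antipode_eq_smul {R A ι : Type*} [CommSemiring R]
    [Semiring A] [HopfAlgebra R A] {a : A} (repr : Repr R a ι) :
    ∑ i ∈ repr.index, antipode R (repr.right i) * antipode R (antipode R (repr.left i)) =
      counit (R := R) a • 1 := by
  simp_rw [← antipode_mul_antidistrib, ← map_sum, sum_antipode_mul_eq_smul, map_smul, antipode_one]

lemma adAction_eq_sum {R A ι : Type*} [CommRing R] [Ring A] [HopfAlgebra R A] {a : A}
    (repr : Repr R a ι) (x : A) :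
    adAction R a x = ∑ i ∈ repr.index, repr.left i * (x * antipode R (repr.right i)) := by
  simp [adAction, ← repr.eq, mul_assoc]

theorem invariant_functional_of_qtrace_property_general
    {R A : Type*} [CommRing R] [Ring A] [HopfAlgebra R A]
    (ψ : A →ₗ[R] R)
    (hψ : ∀ a b : A, ψ (a * b) =
      ψ (b * HopfAlgebra.antipode (R := R) (HopfAlgebra.antipode (R := R) a))) :
    ∀ a x : A, ψ (adAction R a x) = Coalgebra.counit (R := R) a * ψ x := by
  intro a x
  calc ψ (adAction R a x)
      = ∑ i ∈ (ℛ R a).index,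
          ψ (x * (antipode R ((ℛ R a).right i) * antipode R (antipode R ((ℛ R a).left i)))) := by
        rw [adAction_eq_sum (ℛ R a), map_sum]
        exact Finset.sum_congr rfl fun i _ => by rw [hψ, mul_assoc]
    _ = counit (R := R) a * ψ x := by
        rw [← map_sum, ← Finset.mul_sum, sum_antipode_mul_antipode_antipode_eq_smul, mul_smul_comm,
          mul_one, map_smul, smul_eq_mul]

/-- if `ψ(ab) = ψ(b S²(a))` for all `a, b`, then `ψ` is invariant
under the coadjoint action: `ψ(ad_a(x)) = ε(a) ψ(x)`. -/
theorem invariant_functional_of_qtrace_property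
    {R A : Type*} [CommRing R] [Ring A] [HopfAlgebra R A]
    (hS : Function.Bijective (HopfAlgebra.antipode (R := R) (A := A)))
    (ψ : A →ₗ[R] R)
    (hψ : ∀ a b : A, ψ (a * b) =
      ψ (b * HopfAlgebra.antipode (R := R) (HopfAlgebra.antipode (R := R) a))) :
    ∀ a x : A, ψ (adAction R a x) = Coalgebra.counit (R := R) a * ψ x :=
  invariant_functional_of_qtrace_property_general ψ hψ
end

section
/- Let H be a finite-dimensional Hopf algebra and λ a nonzero left integral in H* (i.e. φλ = φ(1)λ for all φ ∈ H*). Then λ is unique up to scalar: if λ' is another left integral then λ' = cλ for some scalar c. -/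
open TensorProduct Coalgebra LinearMap HopfAlgebra

section Conv
variable {k H : Type*} [CommSemiring k] [Semiring H] [Module k H] [Coalgebra k H]
variable {A : Type*} [Semiring A] [Algebra k A]

noncomputable def conv (f g : H →ₗ[k] A) : H →ₗ[k] A :=
  LinearMap.mul' k A ∘ₗ TensorProduct.map f g ∘ₗ Coalgebra.comul

lemma conv_repr {ι : Type*} (f g : H →ₗ[k] A) {a : H} (r : Coalgebra.Repr k a ι) :
    conv f g a = ∑ i ∈ r.index, f (r.left i) * g (r.right i) := by
  simp only [conv, LinearMap.comp_apply, ← r.eq, map_sum, TensorProduct.map_tmul,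
    LinearMap.mul'_apply]

noncomputable def convUnit : H →ₗ[k] A := (Algebra.linearMap k A) ∘ₗ Coalgebra.counit

lemma conv_unit_left (f : H →ₗ[k] A) : conv convUnit f = f := by
  ext a
  have h1 : TensorProduct.map (convUnit (k := k) (H := H) (A := A)) f
      = TensorProduct.map (Algebra.linearMap k A) f ∘ₗ Coalgebra.counit.rTensor H := by
    rw [LinearMap.rTensor, ← TensorProduct.map_comp]
    simp [convUnit]
  simp only [conv, LinearMap.comp_apply, h1, Coalgebra.rTensor_counit_comul,
    TensorProduct.map_tmul, LinearMap.mul'_apply, Algebra.linearMap_apply, map_one, one_mul,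
    LinearMap.id_apply]

lemma conv_unit_right (f : H →ₗ[k] A) : conv f convUnit = f := by
  ext a
  have h1 : TensorProduct.map f (convUnit (k := k) (H := H) (A := A))
      = TensorProduct.map f (Algebra.linearMap k A) ∘ₗ Coalgebra.counit.lTensor H := by
    rw [LinearMap.lTensor, ← TensorProduct.map_comp]
    simp [convUnit]
  simp only [conv, LinearMap.comp_apply, h1, Coalgebra.lTensor_counit_comul,
    TensorProduct.map_tmul, LinearMap.mul'_apply, Algebra.linearMap_apply, map_one, mul_one,
    LinearMap.id_apply]

lemma conv_assoc (f g h : H →ₗ[k] A) : conv (conv f g) h = conv f (conv g h) := by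
  have e1 : TensorProduct.map (conv f g) h
      = TensorProduct.map (LinearMap.mul' k A ∘ₗ TensorProduct.map f g) h
        ∘ₗ Coalgebra.comul.rTensor H := by
    apply TensorProduct.ext'
    intro x y
    simp [conv]
  have e2 : TensorProduct.map f (conv g h)
      = TensorProduct.map f (LinearMap.mul' k A ∘ₗ TensorProduct.map g h)
        ∘ₗ Coalgebra.comul.lTensor H := by
    apply TensorProduct.ext'
    intro x y
    simp [conv]
  have key : (LinearMap.mul' k A ∘ₗ TensorProduct.map (LinearMap.mul' k A ∘ₗ TensorProduct.map f g) h)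
      = (LinearMap.mul' k A ∘ₗ TensorProduct.map f (LinearMap.mul' k A ∘ₗ TensorProduct.map g h))
        ∘ₗ (TensorProduct.assoc k H H H).toLinearMap := by
    ext x y z
    simp [mul_assoc]
  ext a
  calc (conv (conv f g) h) a
      = (LinearMap.mul' k A) (TensorProduct.map (conv f g) h (Coalgebra.comul a)) := rfl
    _ = (LinearMap.mul' k A) ((TensorProduct.map (LinearMap.mul' k A ∘ₗ TensorProduct.map f g) h)
          ((Coalgebra.comul.rTensor H) (Coalgebra.comul a))) := by rw [e1]; rfl
    _ = (LinearMap.mul' k A) ((TensorProduct.map f (LinearMap.mul' k A ∘ₗ TensorProduct.map g h))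
          ((TensorProduct.assoc k H H H) ((Coalgebra.comul.rTensor H) (Coalgebra.comul a)))) :=
        LinearMap.congr_fun key _
    _ = (LinearMap.mul' k A) ((TensorProduct.map f (LinearMap.mul' k A ∘ₗ TensorProduct.map g h))
          ((Coalgebra.comul.lTensor H) (Coalgebra.comul a))) := by rw [Coalgebra.coassoc_apply]
    _ = (conv f (conv g h)) a :=
        (LinearMap.congr_fun (congrArg
          (fun (m : H ⊗[k] H →ₗ[k] A ⊗[k] A) => (LinearMap.mul' k A).comp (m.comp (Coalgebra.comul (R := k)))) e2) a).symm

lemma conv_add_right (f g₁ g₂ : H →ₗ[k] A) : conv f (g₁ + g₂) = conv f g₁ + conv f g₂ := by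
  ext a
  simp [conv, TensorProduct.map_add_right]

lemma conv_zero_right (f : H →ₗ[k] A) : conv f (0 : H →ₗ[k] A) = 0 := by
  ext a
  simp [conv]

end Conv

section Hopf
variable {k H : Type*} [CommSemiring k] [Semiring H] [HopfAlgebra k H]

local notation "S" => HopfAlgebra.antipode (R := k) (A := H)
local notation "Δ" => Coalgebra.comul (R := k) (A := H)
local notation "ε" => Coalgebra.counit (R := k) (A := H)

lemma repr_counit_right {ι : Type*} {a : H} (r : Coalgebra.Repr k a ι) :
    ∑ i ∈ r.index, (Coalgebra.counit (R := k) (r.right i)) • r.left i = a := by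
  have h := Coalgebra.sum_tmul_counit_eq (R := k) r
  apply_fun (TensorProduct.rid k H) at h
  rw [map_sum] at h
  simp only [TensorProduct.rid_tmul, one_smul] at h
  exact h

lemma repr_counit_left {ι : Type*} {a : H} (r : Coalgebra.Repr k a ι) :
    ∑ i ∈ r.index, (Coalgebra.counit (R := k) (r.left i)) • r.right i = a := by
  have h := Coalgebra.sum_counit_tmul_eq (R := k) r
  apply_fun (TensorProduct.lid k H) at h
  rw [map_sum] at h
  simp only [TensorProduct.lid_tmul, one_smul] at h
  exact h

lemma counit_antipode' (a : H) : Coalgebra.counit (R := k) (S a) = Coalgebra.counit (R := k) a := by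
  classical
  set r := ℛ k a
  have h1 := congrArg (Coalgebra.counit (R := k)) (HopfAlgebra.sum_antipode_mul_eq_algebraMap_counit (R := k) r)
  simp only [map_sum, Bialgebra.counit_mul, Bialgebra.counit_algebraMap] at h1
  conv_lhs => rw [← repr_counit_right r]
  simp only [map_sum, map_smul, smul_eq_mul]
  rw [← h1]
  apply Finset.sum_congr rfl
  intros
  ring

/-- `τ ∘ (S ⊗ S) ∘ Δ`. -/
noncomputable def antiComul : H →ₗ[k] H ⊗[k] H :=
  (TensorProduct.comm k H H).toLinearMap ∘ₗ
    TensorProduct.map (HopfAlgebra.antipode k) (HopfAlgebra.antipode k) ∘ₗ Coalgebra.comul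

lemma antiComul_repr {ι : Type*} {a : H} (r : Coalgebra.Repr k a ι) :
    antiComul (k := k) a = ∑ i ∈ r.index, (S (r.right i)) ⊗ₜ[k] (S (r.left i)) := by
  simp only [antiComul, LinearMap.comp_apply, ← r.eq, map_sum, TensorProduct.map_tmul,
    LinearEquiv.coe_coe, TensorProduct.comm_tmul]

lemma conv_comulS_comul :
    conv ((Coalgebra.comul) ∘ₗ ((HopfAlgebra.antipode k))) (Coalgebra.comul)
      = (convUnit : H →ₗ[k] H ⊗[k] H) := by
  ext a
  classical
  rw [conv_repr _ _ (ℛ k a)]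
  simp only [LinearMap.comp_apply, ← Bialgebra.comul_mul]
  rw [← map_sum, HopfAlgebra.sum_antipode_mul_eq_algebraMap_counit (ℛ k a), Bialgebra.comul_algebraMap]
  simp [convUnit]

lemma conv_comul_anti :
    conv (Coalgebra.comul) (antiComul) = (convUnit : H →ₗ[k] H ⊗[k] H) := by
  classical
  ext a
  set r := ℛ k a with hr
  set rx : (i : r.ι) → Coalgebra.Repr k (r.left i) (H × H) := fun i => ℛ k (r.left i) with hrx
  set ry : (i : r.ι) → Coalgebra.Repr k (r.right i) (H × H) := fun i => ℛ k (r.right i) with hry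
  set rc : (i : r.ι) → (j : (ry i).ι) → Coalgebra.Repr k ((ry i).left j) (H × H) :=
    fun i j => ℛ k ((ry i).left j) with hrc
  set rd : (i : r.ι) → (j : (ry i).ι) → Coalgebra.Repr k ((ry i).right j) (H × H) :=
    fun i j => ℛ k ((ry i).right j) with hrd
  set W : H ⊗[k] (H ⊗[k] H) →ₗ[k] H ⊗[k] H :=
    LinearMap.mul' k (H ⊗[k] H) ∘ₗ
      TensorProduct.map LinearMap.id (antiComul) ∘ₗ
        (TensorProduct.assoc k H H H).symm.toLinearMap with hW
  have hWapp : ∀ (p q y : H), W (p ⊗ₜ[k] (q ⊗ₜ[k] y)) = (p ⊗ₜ[k] q) * antiComul (k := k) y := by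
    intro p q y
    simp [hW]
  set V : r.ι → (H ⊗[k] (H ⊗[k] H) →ₗ[k] H ⊗[k] H) := fun i =>
    LinearMap.mul' k (H ⊗[k] H) ∘ₗ
      TensorProduct.map ((TensorProduct.mk k H H) (r.left i))
        ((TensorProduct.comm k H H).toLinearMap ∘ₗ
          TensorProduct.map (HopfAlgebra.antipode k) (HopfAlgebra.antipode k)) with hV
  have hVapp : ∀ (i : r.ι) (p q w : H),
      V i (p ⊗ₜ[k] (q ⊗ₜ[k] w)) = (r.left i ⊗ₜ[k] p) * ((S w) ⊗ₜ[k] (S q)) := by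
    intro i p q w
    simp [hV]
  have step1 : conv (Coalgebra.comul) (antiComul) a
      = ∑ i ∈ r.index, ∑ j ∈ (rx i).index,
          W ((rx i).left j ⊗ₜ[k] ((rx i).right j ⊗ₜ[k] r.right i)) := by
    rw [conv_repr _ _ r]
    refine Finset.sum_congr rfl fun i _ => ?_
    rw [← (rx i).eq, Finset.sum_mul]
    exact Finset.sum_congr rfl fun j _ => (hWapp _ _ _).symm
  have step2 : conv (Coalgebra.comul) (antiComul) a
      = ∑ i ∈ r.index, ∑ j ∈ (ry i).index,
          (r.left i ⊗ₜ[k] (ry i).left j) * antiComul (k := k) ((ry i).right j) := by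
    rw [step1]
    have e := congrArg W (Coalgebra.sum_tmul_tmul_eq (R := k) r rx ry)
    simp only [map_sum] at e
    rw [e]
    exact Finset.sum_congr rfl fun i _ => Finset.sum_congr rfl fun j _ => hWapp _ _ _
  have step3 : conv (Coalgebra.comul) (antiComul) a
      = ∑ i ∈ r.index, ∑ j ∈ (ry i).index, ∑ m ∈ (rc i j).index,
          V i ((rc i j).left m ⊗ₜ[k] ((rc i j).right m ⊗ₜ[k] (ry i).right j)) := by
    rw [step2]
    refine Finset.sum_congr rfl fun i _ => ?_
    have e := congrArg (V i) (Coalgebra.sum_tmul_tmul_eq (R := k) (ry i) (rc i) (rd i))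
    simp only [map_sum] at e
    rw [e]
    refine Finset.sum_congr rfl fun j _ => ?_
    rw [antiComul_repr (rd i j), Finset.mul_sum]
    exact Finset.sum_congr rfl fun m _ => (hVapp _ _ _ _).symm
  rw [step3]
  have step4 : ∀ i ∈ r.index, ∑ j ∈ (ry i).index, ∑ m ∈ (rc i j).index,
      V i ((rc i j).left m ⊗ₜ[k] ((rc i j).right m ⊗ₜ[k] (ry i).right j))
      = (r.left i * S (r.right i)) ⊗ₜ[k] (1 : H) := by
    intro i _
    have inner : ∀ j ∈ (ry i).index, ∑ m ∈ (rc i j).index,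
        V i ((rc i j).left m ⊗ₜ[k] ((rc i j).right m ⊗ₜ[k] (ry i).right j))
        = Coalgebra.counit (R := k) ((ry i).left j) •
            ((r.left i * S ((ry i).right j)) ⊗ₜ[k] (1 : H)) := by
      intro j _
      have : ∀ m ∈ (rc i j).index,
          V i ((rc i j).left m ⊗ₜ[k] ((rc i j).right m ⊗ₜ[k] (ry i).right j))
          = (r.left i * S ((ry i).right j)) ⊗ₜ[k] ((rc i j).left m * S ((rc i j).right m)) := by
        intro m _
        rw [hVapp]
        rw [Algebra.TensorProduct.tmul_mul_tmul]
      rw [Finset.sum_congr rfl this, ← TensorProduct.tmul_sum,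
        HopfAlgebra.sum_mul_antipode_eq_smul (rc i j), TensorProduct.tmul_smul]
    rw [Finset.sum_congr rfl inner]
    have : ∀ j ∈ (ry i).index, Coalgebra.counit (R := k) ((ry i).left j) •
        ((r.left i * S ((ry i).right j)) ⊗ₜ[k] (1 : H))
        = (r.left i * S (Coalgebra.counit (R := k) ((ry i).left j) • (ry i).right j)) ⊗ₜ[k]
            (1 : H) := by
      intro j _
      rw [map_smul, mul_smul_comm, TensorProduct.smul_tmul']
    rw [Finset.sum_congr rfl this, ← TensorProduct.sum_tmul]
    congr 1
    rw [← Finset.mul_sum, ← map_sum, repr_counit_left (ry i)]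
  rw [Finset.sum_congr rfl step4, ← TensorProduct.sum_tmul,
    HopfAlgebra.sum_mul_antipode_eq_algebraMap_counit (R := k) r]
  simp [convUnit, Algebra.TensorProduct.algebraMap_apply]

lemma comul_antipode' : (Coalgebra.comul (R := k) (A := H)) ∘ₗ (HopfAlgebra.antipode (R := k))
    = antiComul := by
  calc (Coalgebra.comul (R := k) (A := H)) ∘ₗ (HopfAlgebra.antipode (R := k))
      = conv ((Coalgebra.comul (R := k) (A := H)) ∘ₗ (HopfAlgebra.antipode k)) convUnit :=
        (conv_unit_right _).symm
    _ = conv ((Coalgebra.comul (R := k) (A := H)) ∘ₗ (HopfAlgebra.antipode k))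
          (conv (Coalgebra.comul) antiComul) := by rw [conv_comul_anti]
    _ = conv (conv ((Coalgebra.comul (R := k) (A := H)) ∘ₗ (HopfAlgebra.antipode k))
          (Coalgebra.comul)) antiComul := (conv_assoc _ _ _).symm
    _ = conv convUnit antiComul := by rw [conv_comulS_comul]
    _ = antiComul := conv_unit_left _

/-- A `Repr` for `S a` obtained by flipping and applying `S` to a `Repr` of `a`. -/
noncomputable def antipodeRepr {ι : Type*} {a : H} (r : Coalgebra.Repr k a ι) :
    Coalgebra.Repr k (S a) ι where
  index := r.index
  left := fun i => S (r.right i)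
  right := fun i => S (r.left i)
  eq := by
    have h := LinearMap.congr_fun (comul_antipode' (k := k) (H := H)) a
    simp only [LinearMap.comp_apply] at h
    rw [h, antiComul_repr r]

/-- The key `S²` identity : `∑ S (S a₂) * S a₁ = ε a • 1`. -/
lemma sum_antipode_antipode {ι : Type*} {a : H} (r : Coalgebra.Repr k a ι) :
    ∑ i ∈ r.index, S (S (r.right i)) * S (r.left i)
      = algebraMap k H (Coalgebra.counit (R := k) a) := by
  have h := HopfAlgebra.sum_antipode_mul_eq_algebraMap_counit (R := k) (antipodeRepr r)
  simpa [antipodeRepr, counit_antipode'] using h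

/-- A `Repr` for a product, built from `Repr`s of the factors. -/
noncomputable def mulRepr {ι κ : Type*} {x y : H} (rx : Coalgebra.Repr k x ι)
    (ry : Coalgebra.Repr k y κ) :
    Coalgebra.Repr k (x * y) (ι × κ) where
  index := rx.index ×ˢ ry.index
  left := fun p => rx.left p.1 * ry.left p.2
  right := fun p => rx.right p.1 * ry.right p.2
  eq := by
    rw [Bialgebra.comul_mul (R := k), ← rx.eq, ← ry.eq, Finset.sum_mul_sum, Finset.sum_product]
    refine Finset.sum_congr rfl fun i _ => Finset.sum_congr rfl fun j _ => ?_
    simp [Algebra.TensorProduct.tmul_mul_tmul]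

lemma claimA (v : H →ₗ[k] k) (hv : ∀ (φ : H →ₗ[k] k) (x : H), conv φ v x = φ 1 * v x)
    (ψ : H →ₗ[k] k) (g x : H) :
    conv ψ (v ∘ₗ LinearMap.mulRight k (S g)) x
      = conv (v ∘ₗ LinearMap.mulLeft k x ∘ₗ (HopfAlgebra.antipode k)) ψ g := by
  classical
  set rg := ℛ k g with hrg
  set rx := ℛ k x with hrx
  set ra : (i : rg.ι) → Coalgebra.Repr k (rg.left i) (H × H) := fun i => ℛ k (rg.left i) with hra
  set rb : (i : rg.ι) → Coalgebra.Repr k (rg.right i) (H × H) := fun i => ℛ k (rg.right i) with hrb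
  set T : rx.ι → (H ⊗[k] (H ⊗[k] H) →ₗ[k] k) := fun m =>
    LinearMap.mul' k k ∘ₗ TensorProduct.map
      (v ∘ₗ LinearMap.mulLeft k (rx.right m) ∘ₗ (HopfAlgebra.antipode k))
      (ψ ∘ₗ LinearMap.mul' k H ∘ₗ TensorProduct.map
        (LinearMap.mulLeft k (rx.left m) ∘ₗ (HopfAlgebra.antipode k)) LinearMap.id) with hT
  have hTapp : ∀ (m : rx.ι) (p q b : H),
      T m (p ⊗ₜ[k] (q ⊗ₜ[k] b)) = v (rx.right m * S p) * ψ ((rx.left m * S q) * b) := by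
    intro m p q b
    simp [hT]
  have rhs1 : conv (v ∘ₗ LinearMap.mulLeft k x ∘ₗ (HopfAlgebra.antipode k)) ψ g
      = ∑ i ∈ rg.index, ∑ m ∈ rx.index, ∑ j ∈ (ra i).index,
          T m ((ra i).left j ⊗ₜ[k] ((ra i).right j ⊗ₜ[k] rg.right i)) := by
    rw [conv_repr _ _ rg]
    refine Finset.sum_congr rfl fun i _ => ?_
    have h1 : (v ∘ₗ LinearMap.mulLeft k x ∘ₗ (HopfAlgebra.antipode k)) (rg.left i) * ψ (rg.right i)
        = ψ (rg.right i) * v (x * S (rg.left i)) := by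
      simp only [LinearMap.comp_apply, LinearMap.mulLeft_apply]
      ring
    rw [h1]
    have h2 := hv (ψ ∘ₗ LinearMap.mulRight k (rg.right i)) (x * S (rg.left i))
    simp only [LinearMap.comp_apply, LinearMap.mulRight_apply, one_mul] at h2
    rw [← h2]
    rw [conv_repr _ _ (mulRepr rx (antipodeRepr (ra i)))]
    rw [show ∑ p ∈ (mulRepr rx (antipodeRepr (ra i))).index,
          (ψ ∘ₗ LinearMap.mulRight k (rg.right i)) ((mulRepr rx (antipodeRepr (ra i))).left p) *
            v ((mulRepr rx (antipodeRepr (ra i))).right p)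
        = ∑ m ∈ rx.index, ∑ j ∈ (ra i).index,
            (ψ ∘ₗ LinearMap.mulRight k (rg.right i))
                ((mulRepr rx (antipodeRepr (ra i))).left (m, j)) *
              v ((mulRepr rx (antipodeRepr (ra i))).right (m, j)) from Finset.sum_product _ _ _]
    refine Finset.sum_congr rfl fun m _ => Finset.sum_congr rfl fun j _ => ?_
    rw [hTapp]
    simp only [mulRepr, antipodeRepr, LinearMap.comp_apply, LinearMap.mulRight_apply]
    ring
  rw [rhs1, Finset.sum_comm]
  rw [conv_repr _ _ rx]
  refine Finset.sum_congr rfl fun m _ => ?_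
  have e := congrArg (T m) (Coalgebra.sum_tmul_tmul_eq (R := k) rg ra rb)
  simp only [map_sum] at e
  rw [e]
  have inner : ∀ i ∈ rg.index, ∑ j ∈ (rb i).index,
      T m (rg.left i ⊗ₜ[k] ((rb i).left j ⊗ₜ[k] (rb i).right j))
      = v (rx.right m * S (rg.left i)) * (Coalgebra.counit (R := k) (rg.right i) • ψ (rx.left m)) := by
    intro i _
    have h3 : ∀ j ∈ (rb i).index,
        T m (rg.left i ⊗ₜ[k] ((rb i).left j ⊗ₜ[k] (rb i).right j))
        = v (rx.right m * S (rg.left i)) * ψ (rx.left m * (S ((rb i).left j) * (rb i).right j)) := by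
      intro j _
      rw [hTapp, mul_assoc]
    rw [Finset.sum_congr rfl h3, ← Finset.mul_sum, ← map_sum, ← Finset.mul_sum,
      HopfAlgebra.sum_antipode_mul_eq_smul (rb i), mul_smul_comm, mul_one, map_smul]
  rw [Finset.sum_congr rfl inner]
  have h4 : ∀ i ∈ rg.index,
      v (rx.right m * S (rg.left i)) * (Coalgebra.counit (R := k) (rg.right i) • ψ (rx.left m))
      = ψ (rx.left m) * v (rx.right m * S (Coalgebra.counit (R := k) (rg.right i) • rg.left i)) := by
    intro i _
    simp only [map_smul, mul_smul_comm, smul_eq_mul]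
    ring
  rw [Finset.sum_congr rfl h4, ← Finset.mul_sum, ← map_sum, ← Finset.mul_sum, ← map_sum,
    repr_counit_right rg]
  simp only [LinearMap.comp_apply, LinearMap.mulRight_apply]

lemma master {ι : Type*} [Fintype ι] (b : Module.Basis ι k H)
    (v : H →ₗ[k] k) (hv : ∀ (φ : H →ₗ[k] k) (x : H), conv φ v x = φ 1 * v x)
    (ξ : H →ₗ[k] k) (g z : H) :
    ∑ u : ι, conv (conv (b.coord u) ξ) (v ∘ₗ LinearMap.mulRight k (S g)) (z * S (S (b u)))
      = v z * ξ g := by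
  classical
  set rg := ℛ k g with hrg
  set ra : (i : rg.ι) → Coalgebra.Repr k (rg.left i) (H × H) := fun i => ℛ k (rg.left i) with hra
  set rb : (i : rg.ι) → Coalgebra.Repr k (rg.right i) (H × H) := fun i => ℛ k (rg.right i) with hrb
  set B : H ⊗[k] H →ₗ[k] k :=
    v ∘ₗ LinearMap.mul' k H ∘ₗ
      TensorProduct.map (LinearMap.mulLeft k z ∘ₗ (HopfAlgebra.antipode k) ∘ₗ (HopfAlgebra.antipode k))
        (HopfAlgebra.antipode k) ∘ₗ (TensorProduct.comm k H H).toLinearMap with hB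
  set T : H ⊗[k] (H ⊗[k] H) →ₗ[k] k :=
    LinearMap.mul' k k ∘ₗ TensorProduct.map B ξ ∘ₗ
      (TensorProduct.assoc k H H H).symm.toLinearMap with hT
  have hTapp : ∀ (p q w : H),
      T (p ⊗ₜ[k] (q ⊗ₜ[k] w)) = v ((z * S (S q)) * S p) * ξ w := by
    intro p q w
    simp [hT, hB]
  have step1 : ∑ u : ι, conv (conv (b.coord u) ξ)
        (v ∘ₗ LinearMap.mulRight k (S g)) (z * S (S (b u)))
      = ∑ i ∈ rg.index, ∑ j ∈ (rb i).index,
          T (rg.left i ⊗ₜ[k] ((rb i).left j ⊗ₜ[k] (rb i).right j)) := by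
    have e1 : ∀ u : ι, conv (conv (b.coord u) ξ)
          (v ∘ₗ LinearMap.mulRight k (S g)) (z * S (S (b u)))
        = ∑ i ∈ rg.index, ∑ j ∈ (rb i).index,
            (b.coord u) ((rb i).left j) *
              v ((z * S (S (b u))) * S (rg.left i)) * ξ ((rb i).right j) := by
      intro u
      rw [claimA v hv _ g _, conv_repr _ _ rg]
      refine Finset.sum_congr rfl fun i _ => ?_
      rw [conv_repr _ _ (rb i), Finset.mul_sum]
      refine Finset.sum_congr rfl fun j _ => ?_
      simp only [LinearMap.comp_apply, LinearMap.mulLeft_apply]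
      ring
    rw [Finset.sum_congr rfl (fun u _ => e1 u), Finset.sum_comm]
    refine Finset.sum_congr rfl fun i _ => ?_
    rw [Finset.sum_comm]
    refine Finset.sum_congr rfl fun j _ => ?_
    set L : H →ₗ[k] k :=
      v ∘ₗ LinearMap.mulRight k (S (rg.left i)) ∘ₗ LinearMap.mulLeft k z ∘ₗ
        (HopfAlgebra.antipode k) ∘ₗ (HopfAlgebra.antipode k) with hL
    have hLapp : ∀ w : H, L w = v ((z * S (S w)) * S (rg.left i)) := by
      intro w
      simp [hL]
    have e2 : ∀ u : ι, (b.coord u) ((rb i).left j) *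
          v ((z * S (S (b u))) * S (rg.left i)) * ξ ((rb i).right j)
        = (L ((b.repr ((rb i).left j)) u • b u)) * ξ ((rb i).right j) := by
      intro u
      rw [map_smul, hLapp]
      simp only [Module.Basis.coord_apply, smul_eq_mul]
    rw [Finset.sum_congr rfl (fun u _ => e2 u), ← Finset.sum_mul, ← map_sum,
      Module.Basis.sum_repr]
    simp only [hLapp, hTapp]
  rw [step1]
  have e3 := congrArg T (Coalgebra.sum_tmul_tmul_eq (R := k) rg ra rb)
  simp only [map_sum] at e3
  rw [← e3]
  have e4 : ∀ i ∈ rg.index, ∑ j ∈ (ra i).index,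
      T ((ra i).left j ⊗ₜ[k] ((ra i).right j ⊗ₜ[k] rg.right i))
      = (Coalgebra.counit (R := k) (rg.left i) • v z) * ξ (rg.right i) := by
    intro i _
    have e5 : ∀ j ∈ (ra i).index,
        T ((ra i).left j ⊗ₜ[k] ((ra i).right j ⊗ₜ[k] rg.right i))
        = v (z * (S (S ((ra i).right j)) * S ((ra i).left j))) * ξ (rg.right i) := by
      intro j _
      rw [hTapp, mul_assoc]
    rw [Finset.sum_congr rfl e5, ← Finset.sum_mul, ← map_sum, ← Finset.mul_sum,
      sum_antipode_antipode (ra i), Algebra.algebraMap_eq_smul_one, mul_smul_comm, mul_one,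
      map_smul]
  rw [Finset.sum_congr rfl e4]
  have e6 : ∀ i ∈ rg.index,
      (Coalgebra.counit (R := k) (rg.left i) • v z) * ξ (rg.right i)
      = v z * ξ (Coalgebra.counit (R := k) (rg.left i) • rg.right i) := by
    intro i _
    simp only [map_smul, smul_eq_mul]
    ring
  rw [Finset.sum_congr rfl e6, ← Finset.mul_sum, ← map_sum, repr_counit_left rg]

end Hopf

/-- for a finite-dimensional Hopf algebra `H` over a field `k`, a
nonzero left integral `λ` in `H*` (meaning `φ * λ = φ(1) λ` for all `φ ∈ H*`,
where `*` is the convolution product) is unique up to scalar: any other left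
integral `λ'` satisfies `λ' = c λ` for some `c ∈ k`. -/
theorem left_integral_unique_up_to_scalar
    {k H : Type*} [Field k] [Ring H] [HopfAlgebra k H] [FiniteDimensional k H]
    (lam : H →ₗ[k] k) (hlam : lam ≠ 0)
    (hint : ∀ (φ : H →ₗ[k] k) (x : H),
      LinearMap.mul' k k ((TensorProduct.map φ lam) (Coalgebra.comul (R := k) x)) =
        φ 1 * lam x)
    (lam' : H →ₗ[k] k)
    (hint' : ∀ (φ : H →ₗ[k] k) (x : H),
      LinearMap.mul' k k ((TensorProduct.map φ lam') (Coalgebra.comul (R := k) x)) =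
        φ 1 * lam' x) :
    ∃ c : k, lam' = c • lam := by
  classical
  by_cases hc : ∃ c : k, lam' = c • lam
  · exact hc
  exfalso
  have hlam' : lam' ≠ 0 := by
    rintro rfl
    exact hc ⟨0, by simp⟩
  have hv : ∀ (φ : H →ₗ[k] k) (x : H), conv φ lam x = φ 1 * lam x := hint
  have hv' : ∀ (φ : H →ₗ[k] k) (x : H), conv φ lam' x = φ 1 * lam' x := hint'
  set b := Module.finBasis k H with hb
  set A : H →ₗ[k] (H →ₗ[k] k) :=
    (LinearMap.llcomp k H H k lam) ∘ₗ (LinearMap.mul k H).flip ∘ₗ HopfAlgebra.antipode (R := k) with hA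
  set A' : H →ₗ[k] (H →ₗ[k] k) :=
    (LinearMap.llcomp k H H k lam') ∘ₗ (LinearMap.mul k H).flip ∘ₗ HopfAlgebra.antipode (R := k) with hA'
  have hAapp : ∀ g : H, A g = lam ∘ₗ LinearMap.mulRight k (HopfAlgebra.antipode (R := k) g) := by
    intro g
    ext x
    simp [hA]
  have hA'app : ∀ g : H, A' g = lam' ∘ₗ LinearMap.mulRight k (HopfAlgebra.antipode (R := k) g) := by
    intro g
    ext x
    simp [hA']
  have key : ∀ g h : H,
      lam ∘ₗ LinearMap.mulRight k (HopfAlgebra.antipode (R := k) g) + lam' ∘ₗ LinearMap.mulRight k (HopfAlgebra.antipode (R := k) h) = 0 →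
      ∀ (z : H) (ξ : H →ₗ[k] k), lam z * ξ g + lam' z * ξ h = 0 := by
    intro g h hgh z ξ
    have h0 : ∀ u : Fin (Module.finrank k H),
        conv (conv (b.coord u) ξ) (lam ∘ₗ LinearMap.mulRight k (HopfAlgebra.antipode (R := k) g))
            (z * HopfAlgebra.antipode (R := k) (HopfAlgebra.antipode (R := k) (b u)))
        + conv (conv (b.coord u) ξ) (lam' ∘ₗ LinearMap.mulRight k (HopfAlgebra.antipode (R := k) h))
            (z * HopfAlgebra.antipode (R := k) (HopfAlgebra.antipode (R := k) (b u)))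
        = 0 := by
      intro u
      have h1 := congrArg (fun (m : H →ₗ[k] k) =>
        conv (conv (b.coord u) ξ) m (z * HopfAlgebra.antipode (R := k) (HopfAlgebra.antipode (R := k) (b u)))) hgh
      simpa [conv_add_right, conv_zero_right] using h1
    have hsum : ∑ u : Fin (Module.finrank k H),
        (conv (conv (b.coord u) ξ) (lam ∘ₗ LinearMap.mulRight k (HopfAlgebra.antipode (R := k) g))
            (z * HopfAlgebra.antipode (R := k) (HopfAlgebra.antipode (R := k) (b u)))
          + conv (conv (b.coord u) ξ) (lam' ∘ₗ LinearMap.mulRight k (HopfAlgebra.antipode (R := k) h))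
            (z * HopfAlgebra.antipode (R := k) (HopfAlgebra.antipode (R := k) (b u))))
        = 0 := Finset.sum_eq_zero fun u _ => h0 u
    rwa [Finset.sum_add_distrib, master b lam hv ξ g z, master b lam' hv' ξ h z] at hsum
  have key2 : ∀ g h : H,
      lam ∘ₗ LinearMap.mulRight k (HopfAlgebra.antipode (R := k) g) + lam' ∘ₗ LinearMap.mulRight k (HopfAlgebra.antipode (R := k) h) = 0 →
      ∀ z : H, lam z • g + lam' z • h = 0 := by
    intro g h hgh z
    rw [← Module.forall_dual_apply_eq_zero_iff k]
    intro φ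
    have h2 := key g h hgh z φ
    simpa [map_add, map_smul, smul_eq_mul] using h2
  obtain ⟨z0, hz0⟩ : ∃ z, lam' z ≠ 0 := by
    by_contra hco
    push_neg at hco
    exact hlam' (by ext x; simp [hco])
  have hker : LinearMap.ker (A.coprod A') = ⊥ := by
    rw [LinearMap.ker_eq_bot']
    rintro ⟨g, h⟩ hgh
    rw [LinearMap.coprod_apply] at hgh
    simp only at hgh
    rw [hAapp, hA'app] at hgh
    have hz := key2 g h hgh
    rw [Prod.mk_eq_zero]
    by_cases hgz : g = 0
    · subst hgz
      refine ⟨rfl, ?_⟩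
      have h3 := hz z0
      simp only [smul_zero, zero_add] at h3
      rcases smul_eq_zero.mp h3 with h1 | h1
      · exact absurd h1 hz0
      · exact h1
    · exfalso
      set t : k := (lam' z0)⁻¹ * (-(lam z0)) with ht
      have h3 := hz z0
      have h4 : lam' z0 • h = -(lam z0 • g) := by
        rwa [add_comm, add_eq_zero_iff_eq_neg] at h3
      have hht : h = t • g := by
        have h5 : h = (lam' z0)⁻¹ • (-(lam z0 • g)) := by
          rw [← h4, inv_smul_smul₀ hz0]
        rw [h5, ← neg_smul, smul_smul]
      have hall : ∀ z, (lam z + lam' z * t) • g = 0 := by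
        intro z
        have h6 := hz z
        rwa [hht, smul_smul, ← add_smul] at h6
      have hco : ∀ z, lam z + lam' z * t = 0 := by
        intro z
        rcases smul_eq_zero.mp (hall z) with h1 | h1
        · exact h1
        · exact absurd h1 hgz
      by_cases htz : t = 0
      · apply hlam
        ext z
        have h7 := hco z
        rw [htz, mul_zero, add_zero] at h7
        simpa using h7
      · apply hc
        refine ⟨-(t⁻¹), ?_⟩
        ext z
        have h7 := hco z
        simp only [LinearMap.smul_apply, smul_eq_mul]
        field_simp
        linear_combination h7
  have hinj : Function.Injective (A.coprod A') := LinearMap.ker_eq_bot.mp hker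
  have hle := LinearMap.finrank_le_finrank_of_injective hinj
  rw [Module.finrank_prod] at hle
  have hdual : Module.finrank k (H →ₗ[k] k) = Module.finrank k H :=
    Subspace.dual_finrank_eq
  rw [hdual] at hle
  have hn0 : Module.finrank k H = 0 := by omega
  have hsing : Subsingleton H := Module.finrank_zero_iff.mp hn0
  exact hlam (by ext x; rw [Subsingleton.elim x (0 : H)]; simp)
end
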